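/- For every constant ε < 1/6 there exist a constant M > 0, an integrable density f : [0,1] → ℝ with f ≥ 0, f ≤ M and ∫₀¹ f = 1, and a constant δ₀ > 0, such that for every δ ∈ (0, δ₀), no strategy profile X = (x₁, x₂, x₃) of three candidates is an ε-equilibrium at separation δ. -/

import Mathlib

open MeasureTheory Classical

/-- `Fcdf f y = ∫₀^y f`, the mass of voters in `[0, y]`. -/
noncomputable def Fcdf (f : ℝ → ℝ) (y : ℝ) : ℝ := ∫ z in (0:ℝ)..y, f z

/-- Utility (vote share) of a candidate located at `p`, given the set `S` of the
positions of the other candidates: he receives the voters between the midpoint with his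
nearest left neighbour (or `0` if none) and the midpoint with his nearest right
neighbour (or `1` if none). -/
noncomputable def util (f : ℝ → ℝ) (p : ℝ) (S : Set ℝ) : ℝ :=
  Fcdf f (if {s ∈ S | p < s}.Nonempty then (p + sInf {s ∈ S | p < s}) / 2 else 1)
    - Fcdf f (if {s ∈ S | s < p}.Nonempty then (p + sSup {s ∈ S | s < p}) / 2 else 0)

/-- `X = (x₁, x₂, x₃)` (with `x₁ < x₂ < x₃`) is an `ε`-equilibrium at separation `δ`:
no candidate can move to an admissible location (within `[0,1]`, at distance at least `δ`
from every other candidate) and increase his utility by more than `ε`. -/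
def IsEquilibrium3 (f : ℝ → ℝ) (x₁ x₂ x₃ δ ε : ℝ) : Prop :=
  (∀ x' ∈ Set.Icc (0:ℝ) 1, δ ≤ |x' - x₂| → δ ≤ |x' - x₃| →
      util f x' {x₂, x₃} ≤ util f x₁ {x₂, x₃} + ε) ∧
  (∀ x' ∈ Set.Icc (0:ℝ) 1, δ ≤ |x' - x₁| → δ ≤ |x' - x₃| →
      util f x' {x₁, x₃} ≤ util f x₂ {x₁, x₃} + ε) ∧
  (∀ x' ∈ Set.Icc (0:ℝ) 1, δ ≤ |x' - x₁| → δ ≤ |x' - x₂| →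
      util f x' {x₁, x₂} ≤ util f x₃ {x₁, x₂} + ε)

lemma Fcdf_zero (f : ℝ → ℝ) : Fcdf f 0 = 0 := intervalIntegral.integral_same

lemma util_left (f : ℝ → ℝ) (p y z : ℝ) (h1 : p < y) (h2 : y ≤ z) :
    util f p {y, z} = Fcdf f ((p + y)/2) := by
  have hup : {s ∈ ({y, z} : Set ℝ) | p < s} = {y, z} := by
    ext s
    constructor
    · rintro ⟨hs, -⟩; exact hs
    · rintro (rfl | rfl)
      · exact ⟨Set.mem_insert _ _, h1⟩
      · exact ⟨Set.mem_insert_of_mem _ rfl, lt_of_lt_of_le h1 h2⟩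
  have hlo : {s ∈ ({y, z} : Set ℝ) | s < p} = ∅ := by
    ext s
    simp only [Set.mem_empty_iff_false, iff_false]
    rintro ⟨(rfl | rfl), hlt⟩
    · exact absurd hlt (not_lt.mpr h1.le)
    · exact absurd hlt (not_lt.mpr (h1.le.trans h2))
  unfold util
  rw [hup, hlo, if_pos ⟨y, Set.mem_insert _ _⟩, if_neg Set.not_nonempty_empty,
    csInf_pair, min_eq_left h2, Fcdf_zero, sub_zero]

lemma util_mid (f : ℝ → ℝ) (p y z : ℝ) (h1 : y < p) (h2 : p < z) :
    util f p {y, z} = Fcdf f ((p + z)/2) - Fcdf f ((p + y)/2) := by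
  have hup : {s ∈ ({y, z} : Set ℝ) | p < s} = {z} := by
    ext s
    simp only [Set.mem_singleton_iff]
    constructor
    · rintro ⟨(rfl | rfl), hlt⟩
      · exact absurd hlt (not_lt.mpr h1.le)
      · rfl
    · rintro rfl; exact ⟨Set.mem_insert_of_mem _ rfl, h2⟩
  have hlo : {s ∈ ({y, z} : Set ℝ) | s < p} = {y} := by
    ext s
    simp only [Set.mem_singleton_iff]
    constructor
    · rintro ⟨(rfl | rfl), hlt⟩
      · rfl
      · exact absurd hlt (not_lt.mpr h2.le)
    · rintro rfl; exact ⟨Set.mem_insert _ _, h1⟩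
  unfold util
  rw [hup, hlo, if_pos ⟨z, rfl⟩, if_pos ⟨y, rfl⟩, csInf_singleton, csSup_singleton]

lemma util_right (f : ℝ → ℝ) (p y z : ℝ) (h1 : y ≤ z) (h2 : z < p) :
    util f p {y, z} = Fcdf f 1 - Fcdf f ((p + z)/2) := by
  have hup : {s ∈ ({y, z} : Set ℝ) | p < s} = ∅ := by
    ext s
    simp only [Set.mem_empty_iff_false, iff_false]
    rintro ⟨(rfl | rfl), hlt⟩
    · exact absurd hlt (not_lt.mpr ((h1.trans h2.le)))
    · exact absurd hlt (not_lt.mpr h2.le)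
  have hlo : {s ∈ ({y, z} : Set ℝ) | s < p} = {y, z} := by
    ext s
    constructor
    · rintro ⟨hs, -⟩; exact hs
    · rintro (rfl | rfl)
      · exact ⟨Set.mem_insert _ _, lt_of_le_of_lt h1 h2⟩
      · exact ⟨Set.mem_insert_of_mem _ rfl, h2⟩
  unfold util
  rw [hup, hlo, if_neg Set.not_nonempty_empty, if_pos ⟨y, Set.mem_insert _ _⟩,
    csSup_pair, max_eq_right h1]



section Fexp
variable {K : ℝ} (hK : 0 < K)

noncomputable def lamK (K : ℝ) : ℝ := 1 - Real.exp (-K)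
noncomputable def F0 (K : ℝ) (y : ℝ) : ℝ := -Real.log (1 - lamK K * y) / K
noncomputable def fden (K : ℝ) (z : ℝ) : ℝ := lamK K / (K * (1 - lamK K * z))

lemma lamK_pos (hK : 0 < K) : 0 < lamK K := by
  have : Real.exp (-K) < 1 := Real.exp_lt_one_iff.mpr (by linarith)
  unfold lamK; linarith

lemma lamK_lt_one : lamK K < 1 := by
  have := Real.exp_pos (-K); unfold lamK; linarith

lemma den_pos (hK : 0 < K) {y : ℝ} (hy : y ≤ 1) : 0 < 1 - lamK K * y := by
  have h1 : lamK K * y ≤ lamK K * 1 := by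
    have := lamK_pos hK
    nlinarith
  have h2 : (1:ℝ) - lamK K * 1 = Real.exp (-K) := by unfold lamK; ring
  have := Real.exp_pos (-K)
  nlinarith

lemma F0_hasDeriv (hK : 0 < K) {z : ℝ} (hz : z ≤ 1) :
    HasDerivAt (F0 K) (fden K z) z := by
  have hpos := den_pos hK hz
  have hlin : HasDerivAt (fun y : ℝ => 1 - lamK K * y) (-(lamK K)) z := by
    simpa using ((hasDerivAt_id z).const_mul (lamK K)).const_sub 1
  have hlog : HasDerivAt (fun y : ℝ => Real.log (1 - lamK K * y))
      ((1 - lamK K * z)⁻¹ * (-(lamK K))) z :=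
    by have := (Real.hasDerivAt_log (ne_of_gt hpos)).comp z hlin; exact this
  have := (hlog.neg).div_const K
  refine this.congr_deriv ?_
  unfold fden
  field_simp

lemma fden_contOn (hK : 0 < K) {a b : ℝ} (hb : a ≤ 1) (hb2 : b ≤ 1) :
    ContinuousOn (fden K) (Set.uIcc a b) := by
  apply ContinuousOn.div continuousOn_const
  · exact (continuous_const.mul (continuous_const.sub (continuous_const.mul continuous_id))).continuousOn
  · intro z hz
    have hz1 : z ≤ 1 := by
      rcases Set.mem_uIcc.mp hz with ⟨-, h⟩ | ⟨-, h⟩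
      · exact h.trans hb2
      · exact h.trans hb
    exact ne_of_gt (mul_pos hK (den_pos hK hz1))

lemma fden_intble (hK : 0 < K) {a b : ℝ} (ha : a ≤ 1) (hb : b ≤ 1) :
    IntervalIntegrable (fden K) volume a b :=
  (fden_contOn hK ha hb).intervalIntegrable



lemma F0_zero : F0 K 0 = 0 := by unfold F0; simp

lemma Fcdf_eq_F0 (hK : 0 < K) {y : ℝ} (hy1 : y ≤ 1) :
    (∫ z in (0:ℝ)..y, fden K z) = F0 K y := by
  have h : (∫ z in (0:ℝ)..y, fden K z) = F0 K y - F0 K 0 := by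
    apply intervalIntegral.integral_eq_sub_of_hasDerivAt
    · intro z hz
      have hz1 : z ≤ 1 := by
        rcases Set.mem_uIcc.mp hz with ⟨-, h⟩ | ⟨-, h⟩
        · exact h.trans hy1
        · exact h.trans zero_le_one
      exact F0_hasDeriv hK hz1
    · exact fden_intble hK zero_le_one hy1
  rw [h, F0_zero, sub_zero]

lemma F0_one (hK : 0 < K) : F0 K 1 = 1 := by
  unfold F0
  have : 1 - lamK K * 1 = Real.exp (-K) := by unfold lamK; ring
  rw [this, Real.log_exp]
  field_simp

lemma F0_mono (hK : 0 < K) {u v : ℝ} (huv : u ≤ v) (hv : v ≤ 1) : F0 K u ≤ F0 K v := by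
  have hu1 : u ≤ 1 := huv.trans hv
  have h1 : 1 - lamK K * v ≤ 1 - lamK K * u := by nlinarith [lamK_pos hK]
  have h2 := Real.log_le_log (den_pos hK hv) h1
  unfold F0
  exact (div_le_div_iff_of_pos_right hK).mpr (by linarith)

lemma F0_lip (hK : 0 < K) {u v : ℝ} (huv : u ≤ v) (hv : v ≤ 1) :
    F0 K v - F0 K u ≤ (lamK K / (K * (1 - lamK K))) * (v - u) := by
  have hdu := den_pos hK (huv.trans hv)
  have hdv := den_pos hK hv
  have hd1 : (0:ℝ) < 1 - lamK K := by
    have : (1:ℝ) - lamK K = Real.exp (-K) := by unfold lamK; ring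
    rw [this]; exact Real.exp_pos _
  have hlam := lamK_pos hK
  have key : Real.log (1 - lamK K * u) - Real.log (1 - lamK K * v)
      ≤ lamK K * (v - u) / (1 - lamK K * v) := by
    have h1 : Real.log (1 - lamK K * u) - Real.log (1 - lamK K * v)
        = Real.log ((1 - lamK K * u) / (1 - lamK K * v)) := by
      rw [Real.log_div (ne_of_gt hdu) (ne_of_gt hdv)]
    rw [h1]
    have h2 := Real.log_le_sub_one_of_pos (div_pos hdu hdv)
    have h3 : (1 - lamK K * u) / (1 - lamK K * v) - 1 = lamK K * (v - u) / (1 - lamK K * v) := by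
      field_simp; ring
    linarith
  have key2 : lamK K * (v - u) / (1 - lamK K * v) ≤ lamK K * (v - u) / (1 - lamK K) := by
    apply div_le_div_of_nonneg_left (by nlinarith) hd1 (by nlinarith)
  have hF : F0 K v - F0 K u
      = (Real.log (1 - lamK K * u) - Real.log (1 - lamK K * v)) / K := by
    unfold F0; field_simp; ring
  rw [hF]
  calc (Real.log (1 - lamK K * u) - Real.log (1 - lamK K * v)) / K
      ≤ (lamK K * (v - u) / (1 - lamK K)) / K := (div_le_div_iff_of_pos_right hK).mpr (key.trans key2)
    _ = lamK K / (K * (1 - lamK K)) * (v - u) := by field_simp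

lemma F0_mid (hK : 0 < K) {x y : ℝ} (hxy : x ≤ y) (hy : y ≤ 1) :
    F0 K ((x + y)/2) ≤ F0 K x + Real.log 2 / K := by
  have hm1 : (x + y)/2 ≤ 1 := by linarith
  have hdx := den_pos hK (hxy.trans hy)
  have hdm := den_pos hK hm1
  have hdy := den_pos hK hy
  have h1 : 1 - lamK K * x ≤ 2 * (1 - lamK K * ((x + y)/2)) := by nlinarith
  have h2 : Real.log (1 - lamK K * x) ≤ Real.log 2 + Real.log (1 - lamK K * ((x + y)/2)) := by
    have := Real.log_le_log hdx h1
    rwa [Real.log_mul (by norm_num) (ne_of_gt hdm)] at this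
  unfold F0
  have h3 : -Real.log (1 - lamK K * ((x + y) / 2)) ≤ -Real.log (1 - lamK K * x) + Real.log 2 := by
    linarith
  calc -Real.log (1 - lamK K * ((x + y) / 2)) / K
      ≤ (-Real.log (1 - lamK K * x) + Real.log 2) / K := (div_le_div_iff_of_pos_right hK).mpr h3
    _ = -Real.log (1 - lamK K * x) / K + Real.log 2 / K := by ring

set_option maxHeartbeats 1600000

/-- For every ε < 1/6 there is a bounded density on [0,1] and a δ₀ > 0
such that for every separation δ ∈ (0, δ₀), no strategy profile of three candidates is an
ε-equilibrium at separation δ. -/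
theorem stmt5 (ε : ℝ) (hε : ε < 1/6) :
    ∃ (M : ℝ) (f : ℝ → ℝ) (δ₀ : ℝ), 0 < M ∧ 0 < δ₀ ∧
      IntervalIntegrable f volume 0 1 ∧
      (∀ z ∈ Set.Icc (0:ℝ) 1, 0 ≤ f z) ∧
      (∀ z ∈ Set.Icc (0:ℝ) 1, f z ≤ M) ∧
      ((∫ z in (0:ℝ)..1, f z) = 1) ∧
      ∀ δ : ℝ, 0 < δ → δ < δ₀ →
        ∀ x₁ x₂ x₃ : ℝ, 0 ≤ x₁ → x₁ + δ ≤ x₂ → x₂ + δ ≤ x₃ → x₃ ≤ 1 →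
          ¬ IsEquilibrium3 f x₁ x₂ x₃ δ ε := by

  set G : ℝ := 1 - 6 * ε with hGdef
  have hG : 0 < G := by simp only [hGdef]; linarith
  set K : ℝ := 28 / G with hKdef
  have hK : 0 < K := by positivity
  set lam : ℝ := lamK K with hlamdef
  have hlam : 0 < lam := lamK_pos hK
  have hexp : (0:ℝ) < 1 - lam := by
    have : (1:ℝ) - lam = Real.exp (-K) := by rw [hlamdef]; unfold lamK; ring
    rw [this]; exact Real.exp_pos _
  set M : ℝ := lam / (K * (1 - lam)) with hMdef
  have hM : 0 < M := by positivity
  set δ₀ : ℝ := G / (12 * M) with hδ₀def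
  have hδ₀ : 0 < δ₀ := by positivity
  set κ : ℝ := Real.log 2 / K with hκdef
  have hκ0 : 0 ≤ κ := by
    have : (0:ℝ) ≤ Real.log 2 := Real.log_nonneg (by norm_num)
    positivity
  have hκ : 7 * κ ≤ G / 4 := by
    have hlog2 : Real.log 2 ≤ 1 := by
      have := Real.log_two_lt_d9; linarith
    have : κ = Real.log 2 * G / 28 := by
      rw [hκdef, hKdef, div_div_eq_mul_div]
    rw [this]
    nlinarith
  refine ⟨M, fden K, δ₀, hM, hδ₀, fden_intble hK zero_le_one le_rfl, ?_, ?_, ?_, ?_⟩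
  · intro z hz
    exact div_nonneg hlam.le (mul_pos hK (den_pos hK hz.2)).le
  · intro z hz
    rw [hMdef]
    unfold fden
    rw [← hlamdef]
    apply div_le_div_of_nonneg_left hlam.le (mul_pos hK hexp)
    have : lam * z ≤ lam * 1 := mul_le_mul_of_nonneg_left hz.2 hlam.le
    nlinarith
  · rw [Fcdf_eq_F0 hK le_rfl, F0_one hK]
  intro δ hδ hδδ₀ x1 x2 x3 hx1 hx12 hx23 hx31 hEq
  obtain ⟨hd1, hd2, -⟩ := hEq
  -- abbreviations and basic facts
  have hMδ : M * δ < G / 12 := by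
    have h1 : M * δ < M * δ₀ := mul_lt_mul_of_pos_left hδδ₀ hM
    have h2 : M * δ₀ = G / 12 := by
      rw [hδ₀def]; field_simp
    linarith
  have hhalf : M * (δ / 2) * 2 = M * δ := by ring
  have hFc : ∀ y : ℝ, y ≤ 1 → Fcdf (fden K) y = F0 K y := fun y hy => Fcdf_eq_F0 hK hy
  have hmono : ∀ u v : ℝ, u ≤ v → v ≤ 1 → F0 K u ≤ F0 K v := fun u v h h' => F0_mono hK h h'
  have hlip : ∀ u v : ℝ, u ≤ v → v ≤ 1 → F0 K v - F0 K u ≤ M * (v - u) := by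
    intro u v h h'
    rw [hMdef, hlamdef]
    exact F0_lip hK h h'
  have hmid : ∀ x y : ℝ, x ≤ y → y ≤ 1 → F0 K ((x + y)/2) ≤ F0 K x + κ := by
    intro x y h h'
    rw [hκdef]
    exact F0_mid hK h h'
  -- deviation 1 : candidate 1 moves to x2 - δ
  have e1 : F0 K (x2 - δ/2) ≤ F0 K ((x1 + x2)/2) + ε := by
    have h := hd1 (x2 - δ) ⟨by linarith, by linarith⟩
      (by rw [show x2 - δ - x2 = -δ by ring, abs_neg, abs_of_pos hδ])
      (by rw [abs_sub_comm, abs_of_nonneg (by linarith : (0:ℝ) ≤ x3 - (x2 - δ))]; linarith)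
    rw [util_left (fden K) (x2 - δ) x2 x3 (by linarith) (by linarith),
      util_left (fden K) x1 x2 x3 (by linarith) (by linarith),
      show (x2 - δ + x2)/2 = x2 - δ/2 by ring,
      hFc _ (by linarith), hFc _ (by linarith)] at h
    exact h
  have lA : F0 K x2 - F0 K (x2 - δ/2) ≤ M * (δ/2) := by
    have := hlip (x2 - δ/2) x2 (by linarith) (by linarith)
    rw [show x2 - (x2 - δ/2) = δ/2 by ring] at this
    exact this
  have mA := hmid x1 x2 (by linarith) (by linarith)
  -- deviation 3 : candidate 2 moves to x3 - δ
  have e3 : F0 K (x3 - δ/2) - F0 K ((x3 - δ + x1)/2) ≤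
      F0 K ((x2 + x3)/2) - F0 K ((x1 + x2)/2) + ε := by
    have h := hd2 (x3 - δ) ⟨by linarith, by linarith⟩
      (by rw [abs_of_nonneg (by linarith : (0:ℝ) ≤ x3 - δ - x1)]; linarith)
      (by rw [show x3 - δ - x3 = -δ by ring, abs_neg, abs_of_pos hδ])
    rw [util_mid (fden K) (x3 - δ) x1 x3 (by linarith) (by linarith),
      util_mid (fden K) x2 x1 x3 (by linarith) (by linarith),
      show (x3 - δ + x3)/2 = x3 - δ/2 by ring,
      show (x2 + x1)/2 = (x1 + x2)/2 by ring,
      hFc _ (by linarith), hFc _ (by linarith), hFc _ (by linarith), hFc _ (by linarith)] at h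
    exact h
  have lC : F0 K x3 - F0 K (x3 - δ/2) ≤ M * (δ/2) := by
    have := hlip (x3 - δ/2) x3 (by linarith) (by linarith)
    rw [show x3 - (x3 - δ/2) = δ/2 by ring] at this
    exact this
  have dC : F0 K ((x3 - δ + x1)/2) ≤ F0 K ((x1 + x3)/2) :=
    hmono _ _ (by linarith) (by linarith)
  have mC := hmid x1 x3 (by linarith) (by linarith)
  have mB := hmid x2 x3 (by linarith) (by linarith)
  have mono1 : F0 K x1 ≤ F0 K ((x1 + x2)/2) := hmono _ _ (by linarith) (by linarith)
  have mono12 : F0 K x1 ≤ F0 K x2 := hmono _ _ (by linarith) (by linarith)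
  have hMδ0 : 0 ≤ M * δ := by positivity
  -- bound on F0 x1 (case split)
  have hB : F0 K x1 ≤ 2 * ε + 2 * κ + 2 * (M * δ) := by
    rcases le_or_gt δ x1 with hcase | hcase
    · have h := hd2 (x1 - δ) ⟨by linarith, by linarith⟩
        (by rw [show x1 - δ - x1 = -δ by ring, abs_neg, abs_of_pos hδ])
        (by rw [abs_sub_comm, abs_of_nonneg (by linarith : (0:ℝ) ≤ x3 - (x1 - δ))]; linarith)
      rw [util_left (fden K) (x1 - δ) x1 x3 (by linarith) (by linarith),
        util_mid (fden K) x2 x1 x3 (by linarith) (by linarith),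
        show (x1 - δ + x1)/2 = x1 - δ/2 by ring,
        show (x2 + x1)/2 = (x1 + x2)/2 by ring,
        hFc _ (by linarith), hFc _ (by linarith), hFc _ (by linarith)] at h
      have lB : F0 K x1 - F0 K (x1 - δ/2) ≤ M * (δ/2) := by
        have := hlip (x1 - δ/2) x1 (by linarith) (by linarith)
        rw [show x1 - (x1 - δ/2) = δ/2 by ring] at this
        exact this
      linarith
    · have h0 : F0 K x1 - F0 K 0 ≤ M * (x1 - 0) := hlip 0 x1 (by linarith) (by linarith)
      have hz : F0 K 0 = 0 := F0_zero
      rw [hz, sub_zero, sub_zero] at h0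
      have hx1δ : M * x1 ≤ M * δ := mul_le_mul_of_nonneg_left hcase.le hM.le
      linarith [e1, lA, mA, mono12, hhalf, hMδ0]
  -- bound on 1 - F0 x3 (case split)
  have hD : 1 - F0 K x3 ≤ F0 K ((x2 + x3)/2) - F0 K ((x1 + x2)/2) + ε + M * (δ/2) + M * δ := by
    rcases le_or_gt x3 (1 - δ) with hcase | hcase
    · have h := hd2 (x3 + δ) ⟨by linarith, by linarith⟩
        (by rw [abs_of_nonneg (by linarith : (0:ℝ) ≤ x3 + δ - x1)]; linarith)
        (by rw [abs_of_nonneg (by linarith : (0:ℝ) ≤ x3 + δ - x3)]; linarith)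
      rw [util_right (fden K) (x3 + δ) x1 x3 (by linarith) (by linarith),
        util_mid (fden K) x2 x1 x3 (by linarith) (by linarith),
        show (x3 + δ + x3)/2 = x3 + δ/2 by ring,
        show (x2 + x1)/2 = (x1 + x2)/2 by ring,
        hFc _ (by linarith), hFc _ (by linarith), hFc _ (by linarith), hFc _ (by linarith),
        F0_one hK] at h
      have lD : F0 K (x3 + δ/2) - F0 K x3 ≤ M * (δ/2) := by
        have := hlip x3 (x3 + δ/2) (by linarith) (by linarith)
        rw [show x3 + δ/2 - x3 = δ/2 by ring] at this
        exact this
      linarith [hM.le, mul_nonneg hM.le hδ.le]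
    · have h0 : F0 K 1 - F0 K x3 ≤ M * (1 - x3) := hlip x3 1 (by linarith) le_rfl
      have h1 : M * (1 - x3) ≤ M * δ := mul_le_mul_of_nonneg_left (by linarith) hM.le
      have h2 : F0 K 1 = 1 := F0_one hK
      have h3 : F0 K ((x1 + x2)/2) ≤ F0 K ((x2 + x3)/2) :=
        hmono _ _ (by linarith) (by linarith)
      have h4 : 0 ≤ M * (δ/2) := by positivity
      linarith
  -- final contradiction
  linarith [e1, lA, mA, e3, lC, dC, mC, mB, mono1, hB, hD, hκ, hMδ, hhalf, hκ0]
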